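/- For every relaxed σ-scenario 𝒮 = (T,S,μ,τ_T,τ_S,σ), the weak quasi-orthology graph Ψw(𝒮), the weak orthology graph Θw(𝒮), and the strict orthology graph Θs(𝒮) are cographs. -/

import Mathlib

/-- A planted phylogenetic rooted tree, encoded by a parent function on a
finite vertex set.  The root `0_T` is a fixed point of `parent`; every vertex
reaches the root by iterating `parent`; the root has exactly one child
(`planted`); and every inner vertex (non-root vertex having a child) has at
least two children (`phylo`). -/
structure PPTree where
  V : Type
  [fintypeV : Fintype V]
  [decEqV : DecidableEq V]
  root : V
  parent : V → V
  parent_root : parent root = root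
  reach : ∀ v : V, ∃ n : ℕ, parent^[n] v = root
  planted : ∃! v : V, v ≠ root ∧ parent v = root
  phylo : ∀ v : V, v ≠ root → (∃ u, parent u = v ∧ u ≠ v) →
      ∃ u w, parent u = v ∧ parent w = v ∧ u ≠ w ∧ u ≠ v ∧ w ≠ v

attribute [instance] PPTree.fintypeV PPTree.decEqV

namespace PPTree

variable (T : PPTree)

/-- `T.le x y` means `x ⪯_T y`, i.e. `y` is an ancestor of `x` (or `x = y`). -/
def le (x y : T.V) : Prop := ∃ n : ℕ, T.parent^[n] x = y

/-- `T.lt x y` means `x ≺_T y`. -/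
def lt (x y : T.V) : Prop := T.le x y ∧ x ≠ y

/-- Leaves are the `⪯_T`-minimal vertices, i.e. vertices without children. -/
def isLeaf (v : T.V) : Prop := ∀ u, T.parent u = v → u = v

/-- Inner vertices: neither leaves nor the planted root. -/
def inner (v : T.V) : Prop := v ≠ T.root ∧ ¬ T.isLeaf v

/-- The last common ancestor of two vertices: the `⪯_T`-minimal common
ancestor. -/
noncomputable def lca (x y : T.V) : T.V :=
  @Classical.epsilon _ ⟨T.root⟩
    fun v => T.le x v ∧ T.le y v ∧ ∀ w, T.le x w → T.le y w → T.le v w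

/-- The last common ancestor of a set of vertices. -/
noncomputable def lcaSet (A : Set T.V) : T.V :=
  @Classical.epsilon _ ⟨T.root⟩
    fun v => (∀ a ∈ A, T.le a v) ∧ ∀ w, (∀ a ∈ A, T.le a w) → T.le v w

/-- `ρ_T`, the unique child of the planted root. -/
noncomputable def rho : T.V := T.planted.choose

theorem rho_ne_root : T.rho ≠ T.root := T.planted.choose_spec.1.1

/-- Edges of `T`, identified with their child endpoint: the vertex `v ≠ 0_T`
represents the edge `(parent v, v)`. -/
abbrev Edge := {v : T.V // v ≠ T.root}

/-- The union `V(T) ∪ E(T)`. -/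
abbrev VE := T.V ⊕ T.Edge

/-- The ancestor order `⪯_T` extended to `V(T) ∪ E(T)`: for an edge `e = uv`
(`u` the parent of `v`), `x ⪯ e` iff `x ⪯ v`, `e ⪯ x` iff `u ⪯ x`, and
`e ⪯ f` iff the child endpoints are comparable accordingly. -/
def leVE : T.VE → T.VE → Prop
  | Sum.inl x, Sum.inl y => T.le x y
  | Sum.inl x, Sum.inr e => T.le x e.1
  | Sum.inr e, Sum.inl y => T.le (T.parent e.1) y
  | Sum.inr e, Sum.inr f => T.le e.1 f.1

def ltVE (a b : T.VE) : Prop := T.leVE a b ∧ a ≠ b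

/-- Two elements of `V(T) ∪ E(T)` are comparable. -/
def cmpVE (a b : T.VE) : Prop := T.leVE a b ∨ T.leVE b a

/-- Membership in `L(T)` for elements of `V(T) ∪ E(T)`. -/
def isLeafVE : T.VE → Prop
  | Sum.inl v => T.isLeaf v
  | Sum.inr _ => False

/-- Map an element of `V(T) ∪ E(T)` to a vertex (an edge `uv` is sent to its
child endpoint `v`). -/
def toVertex : T.VE → T.V
  | Sum.inl v => v
  | Sum.inr e => e.1

end PPTree

/-- Axioms (R0)–(R3) of a reconciliation map `μ : V(T) → V(S) ∪ E(S)`. -/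
structure IsRecon (T S : PPTree) (μ : T.V → S.VE) : Prop where
  R0 : ∀ x, μ x = Sum.inl S.root ↔ x = T.root
  R1 : ∀ x, S.isLeafVE (μ x) ↔ T.isLeaf x
  R2 : ∀ x y, T.lt y x → (∃ u, μ x = Sum.inl u) → (∃ v, μ y = Sum.inl v) → μ x ≠ μ y
  R3 : ∀ x y, T.lt y x → ¬ S.ltVE (μ x) (μ y)

/-- A reconciliation is HGT-free if the images of the endpoints of every edge
of `T` are `⪯_S`-comparable. -/
def IsHGTFree (T S : PPTree) (μ : T.V → S.VE) : Prop :=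
  ∀ v : T.V, v ≠ T.root → S.cmpVE (μ (T.parent v)) (μ v)

/-- `(T,S,μ,σ)` is a σ-reconciliation when `μ` restricted to `L(T)` equals
`σ`. -/
def SigmaCompat (T S : PPTree) (μ : T.V → S.VE) (σ : T.V → S.V) : Prop :=
  ∀ x, T.isLeaf x → μ x = Sum.inl (σ x)

/-- A time map for `T`. -/
def IsTimeMap (T : PPTree) (τ : T.V → ℝ) : Prop :=
  ∀ x y, T.lt x y → τ x < τ y

/-- Axioms (S0)–(S3) of a relaxed scenario `(T,S,μ,τ_T,τ_S)`. -/
structure IsRelaxedScenario (T S : PPTree) (μ : T.V → S.VE)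
    (τT : T.V → ℝ) (τS : S.V → ℝ) : Prop where
  timeT : IsTimeMap T τT
  timeS : IsTimeMap S τS
  S0 : ∀ x, μ x = Sum.inl S.root ↔ x = T.root
  S1 : ∀ x, S.isLeafVE (μ x) ↔ T.isLeaf x
  S2 : ∀ x v, μ x = Sum.inl v → τS v = τT x
  S3 : ∀ x (e : S.Edge), μ x = Sum.inr e → τS e.1 < τT x ∧ τT x < τS (S.parent e.1)

/-- The path in `T` between the leaves `x` and `y` contains an HGT-edge of
the scenario (edges are identified with their child endpoints `w`; the edges
of the path between `x` and `y` are those with `x ⪯ w` or `y ⪯ w`, and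
`w ≺ lca_T(x,y)`; such an edge is an HGT-edge if the images under `μ` of its
endpoints are `⪯_S`-incomparable). -/
def PathHGT (T S : PPTree) (μ : T.V → S.VE) (x y : T.V) : Prop :=
  ∃ w : T.V, (T.le x w ∨ T.le y w) ∧ T.lt w (T.lca x y) ∧
    ¬ S.cmpVE (μ (T.parent w)) (μ w)

/-- `x` and `y` are weak quasi-orthologs: `μ(lca_T(x,y)) ∈ V⁰(S)`. -/
def WeakQuasiOrtholog (T S : PPTree) (μ : T.V → S.VE) (x y : T.V) : Prop :=
  T.isLeaf x ∧ T.isLeaf y ∧ x ≠ y ∧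
    ∃ v : S.V, μ (T.lca x y) = Sum.inl v ∧ v ≠ S.root ∧ ¬ S.isLeaf v

/-- `x` and `y` are weak orthologs: weak quasi-orthologs such that no
HGT-edge lies on the path between `x` and `y`. -/
def WeakOrtholog (T S : PPTree) (μ : T.V → S.VE) (x y : T.V) : Prop :=
  WeakQuasiOrtholog T S μ x y ∧ ¬ PathHGT T S μ x y

/-- `x` and `y` are strict quasi-orthologs:
`μ(lca_T(x,y)) = lca_S(σ(x),σ(y))`. -/
def StrictQuasiOrtholog (T S : PPTree) (μ : T.V → S.VE) (σ : T.V → S.V)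
    (x y : T.V) : Prop :=
  T.isLeaf x ∧ T.isLeaf y ∧ x ≠ y ∧
    μ (T.lca x y) = Sum.inl (S.lca (σ x) (σ y))

/-- `x` and `y` are strict orthologs: strict quasi-orthologs such that no
HGT-edge lies on the path between `x` and `y`. -/
def StrictOrtholog (T S : PPTree) (μ : T.V → S.VE) (σ : T.V → S.V)
    (x y : T.V) : Prop :=
  StrictQuasiOrtholog T S μ σ x y ∧ ¬ PathHGT T S μ x y

/-- An adjacency predicate `P` on the leaves of `T` is a cograph: there is no
induced path `P₄` on four (pairwise distinct) leaves. -/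
def IsCographOnLeaves (T : PPTree) (P : T.V → T.V → Prop) : Prop :=
  ¬ ∃ a b c d : T.V,
      T.isLeaf a ∧ T.isLeaf b ∧ T.isLeaf c ∧ T.isLeaf d ∧
      a ≠ b ∧ a ≠ c ∧ a ≠ d ∧ b ≠ c ∧ b ≠ d ∧ c ≠ d ∧
      P a b ∧ P b c ∧ P c d ∧ ¬ P a c ∧ ¬ P a d ∧ ¬ P b d

/-!
`Ψw` is the graph `x ∼ y ↔ t (lca_T x y)` for a predicate `t` on vertices of `T`, and no such
graph contains an induced `P₄ = a-b-c-d`: by the three-point condition for last common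
ancestors, the three edges share one lca `u`, and then so does one of the non-edges
`ac`, `bd`, `ad`. Being joined by an HGT-free path is transitive (an edge separating `a` from `c`
separates `b` from `a` or from `c`), so `Θw = Ψw ∩ {HGT-free}` inherits this.

For `Θs`, all six paths of a `P₄` are HGT-free, and along HGT-free paths `μ` is monotone, so
`lca_S(σ x, σ y) ⪯ μ(lca_T x y)`. Time consistency forces the three edges to share one `u` in `T`
and one `m = μ u` in `S`. The three-point condition in `S` yields a non-edge `xy` with
`lca_S(σ x, σ y) = m`; then `μ(lca_T x y)` is squeezed between `m` and `μ u = m`, so `xy` is an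
edge after all.
-/

namespace PPTree

variable {T : PPTree} {x y z u v w : T.V}

theorem iterate_parent_root (n : ℕ) : T.parent^[n] T.root = T.root :=
  Function.iterate_fixed T.parent_root n

theorem eq_root_of_isPeriodicPt {p : ℕ} (hp : 0 < p) (h : Function.IsPeriodicPt T.parent p x) :
    x = T.root := by
  obtain ⟨k, hk⟩ := T.reach x
  have hkp : k ≤ p * k := Nat.le_mul_of_pos_left k hp
  calc x = T.parent^[p * k] x := (h.mul_const k).eq.symm
    _ = T.parent^[p * k - k] (T.parent^[k] x) := by
      rw [← Function.iterate_add_apply, Nat.sub_add_cancel hkp]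
    _ = T.root := by rw [hk, iterate_parent_root]

theorem le.antisymm (hxy : T.le x y) (hyx : T.le y x) : x = y := by
  obtain ⟨m, hm⟩ := hxy
  obtain ⟨n, hn⟩ := hyx
  rcases Nat.eq_zero_or_pos (n + m) with h0 | hpos
  · obtain rfl : m = 0 := by omega
    exact hm
  · obtain rfl : x = T.root := eq_root_of_isPeriodicPt hpos <| by
      rw [Function.IsPeriodicPt, Function.IsFixedPt, Function.iterate_add_apply, hm, hn]
    rw [← hm, iterate_parent_root]

instance (T : PPTree) : PartialOrder T.V where
  le := T.le
  lt := T.lt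
  le_refl _ := ⟨0, rfl⟩
  le_trans _ _ _ := fun ⟨m, hm⟩ ⟨n, hn⟩ =>
    ⟨n + m, by rw [Function.iterate_add_apply, hm, hn]⟩
  le_antisymm _ _ := le.antisymm
  lt_iff_le_not_ge _ _ :=
    ⟨fun ⟨h, hne⟩ => ⟨h, fun h' => hne (le.antisymm h h')⟩,
      fun ⟨h, h'⟩ => ⟨h, fun e => h' (e ▸ ⟨0, rfl⟩)⟩⟩

theorem le_iff_exists_iterate : x ≤ y ↔ ∃ n, T.parent^[n] x = y := Iff.rfl

theorem le_root (x : T.V) : x ≤ T.root := T.reach x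

theorem le_parent (x : T.V) : x ≤ T.parent x := ⟨1, rfl⟩

theorem parent_le_of_lt (h : x < y) : T.parent x ≤ y := by
  obtain ⟨⟨n, hn⟩, hne⟩ := h
  cases n with
  | zero => exact absurd hn hne
  | succ n => exact ⟨n, by rwa [Function.iterate_succ_apply] at hn⟩

theorem eq_root_of_parent_le (h : T.parent x ≤ x) : x = T.root :=
  eq_root_of_isPeriodicPt one_pos (le_antisymm h (le_parent x))

theorem le_total_of_le_of_le (hy : x ≤ y) (hz : x ≤ z) : y ≤ z ∨ z ≤ y := by
  obtain ⟨m, rfl⟩ := hy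
  obtain ⟨n, rfl⟩ := hz
  rcases Nat.le_total m n with h | h
  · exact .inl ⟨n - m, by rw [← Function.iterate_add_apply, Nat.sub_add_cancel h]⟩
  · exact .inr ⟨m - n, by rw [← Function.iterate_add_apply, Nat.sub_add_cancel h]⟩

theorem exists_lca (x y : T.V) :
    ∃ v, x ≤ v ∧ y ≤ v ∧ ∀ w, x ≤ w → y ≤ w → v ≤ w := by
  classical
  obtain ⟨k, hk⟩ := T.reach x
  have hP : ∃ n, y ≤ T.parent^[n] x := ⟨k, hk ▸ le_root y⟩
  refine ⟨T.parent^[Nat.find hP] x, ⟨_, rfl⟩, Nat.find_spec hP, fun w ⟨m, hm⟩ hyw => ?_⟩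
  have hle : Nat.find hP ≤ m := Nat.find_min' hP (hm ▸ hyw)
  exact ⟨m - Nat.find hP, by rw [← Function.iterate_add_apply, Nat.sub_add_cancel hle, hm]⟩

theorem lca_spec (x y : T.V) :
    x ≤ T.lca x y ∧ y ≤ T.lca x y ∧ ∀ w, x ≤ w → y ≤ w → T.lca x y ≤ w :=
  Classical.epsilon_spec (exists_lca x y)

theorem le_lca_left (x y : T.V) : x ≤ T.lca x y := (lca_spec x y).1

theorem le_lca_right (x y : T.V) : y ≤ T.lca x y := (lca_spec x y).2.1

theorem lca_le (hx : x ≤ w) (hy : y ≤ w) : T.lca x y ≤ w := (lca_spec x y).2.2 w hx hy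

theorem lca_comm (x y : T.V) : T.lca x y = T.lca y x :=
  le_antisymm (lca_le (le_lca_right y x) (le_lca_left y x))
    (lca_le (le_lca_right x y) (le_lca_left x y))

theorem lca_eq_of_lca_lt (h : T.lca x y < T.lca y z) : T.lca x z = T.lca y z := by
  rcases le_total_of_le_of_le (le_lca_left x z) (le_lca_left x y) with hle | hle
  · exact absurd (lca_le (le_lca_right x y) ((le_lca_right x z).trans hle)) (not_le_of_gt h)
  · exact le_antisymm (lca_le ((le_lca_left x y).trans h.le) (le_lca_right y z))
      (lca_le ((le_lca_right x y).trans hle) (le_lca_right x z))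

theorem lca_eq_or_eq_of_ne (h : T.lca x y ≠ T.lca y z) :
    T.lca x z = T.lca x y ∨ T.lca x z = T.lca y z := by
  rcases le_total_of_le_of_le (le_lca_right x y) (le_lca_left y z) with hle | hle
  · exact .inr (lca_eq_of_lca_lt (lt_of_le_of_ne hle h))
  · rw [lca_comm y z, lca_comm x y] at hle h
    have := lca_eq_of_lca_lt (lt_of_le_of_ne hle (Ne.symm h))
    rw [lca_comm z x, lca_comm y x] at this
    exact .inl this

theorem lca_eq_lca_of_not_pred (t : T.V → Prop) (hxy : t (T.lca x y)) (hyz : t (T.lca y z))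
    (hxz : ¬ t (T.lca x z)) : T.lca x y = T.lca y z := by
  by_contra h
  rcases lca_eq_or_eq_of_ne h with e | e <;> rw [e] at hxz <;> contradiction

theorem lca_eq_or_lca_eq_or_lca_eq {a b c d : T.V} (h₁ : T.lca a b = u) (h₂ : T.lca b c = u)
    (h₃ : T.lca c d = u) : T.lca a c = u ∨ T.lca b d = u ∨ T.lca a d = u := by
  by_contra! h
  obtain ⟨hac, hbd, had⟩ := h
  have had' : T.lca a d = T.lca a c := by
    rcases lca_eq_or_eq_of_ne (h₃ ▸ hac : T.lca a c ≠ T.lca c d) with e | e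
    · exact e
    · exact absurd (e.trans h₃) had
  have hbd' : T.lca b d = T.lca a d := by
    rcases lca_eq_or_eq_of_ne (by rwa [lca_comm, h₁, ne_comm] : T.lca b a ≠ T.lca a d)
      with e | e
    · exact absurd (by rwa [lca_comm b a, h₁] at e) hbd
    · exact e
  refine had (le_antisymm (lca_le (h₁ ▸ le_lca_left a b) (h₃ ▸ le_lca_right c d)) ?_)
  rw [← h₂]
  exact lca_le (hbd' ▸ le_lca_left b d) (had' ▸ le_lca_right a c)

theorem leVE_refl : ∀ α : T.VE, T.leVE α α
  | .inl x => le_refl x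
  | .inr e => le_refl e.1

theorem leVE_trans : ∀ {α β γ : T.VE}, T.leVE α β → T.leVE β γ → T.leVE α γ
  | .inl _, .inl _, .inl _, h₁, h₂ | .inl _, .inl _, .inr _, h₁, h₂
  | .inl _, .inr _, .inr _, h₁, h₂ | .inr _, .inl _, .inl _, h₁, h₂
  | .inr _, .inr _, .inr _, h₁, h₂ => le_trans (α := T.V) h₁ h₂
  | .inl _, .inr f, .inl _, h₁, h₂ => le_trans (α := T.V) h₁ ((le_parent f.1).trans h₂)
  | .inr e, .inl _, .inr _, h₁, h₂ => (le_parent e.1).trans (le_trans (α := T.V) h₁ h₂)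
  | .inr e, .inr f, .inl _, h₁, h₂ => by
    by_cases hef : e = f
    · subst hef
      exact h₂
    · exact (parent_le_of_lt (lt_of_le_of_ne h₁ fun h => hef (Subtype.ext h))).trans
        ((le_parent f.1).trans h₂)

theorem leVE_antisymm : ∀ {α β : T.VE}, T.leVE α β → T.leVE β α → α = β
  | .inl _, .inl _, h₁, h₂ => congrArg _ (le_antisymm h₁ h₂)
  | .inr _, .inr _, h₁, h₂ => congrArg _ (Subtype.ext (le_antisymm h₁ h₂))
  | .inl _, .inr e, h₁, h₂ => (e.2 (eq_root_of_parent_le (le_trans (α := T.V) h₂ h₁))).elim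
  | .inr e, .inl _, h₁, h₂ => (e.2 (eq_root_of_parent_le (le_trans (α := T.V) h₁ h₂))).elim

theorem inl_lca_leVE : ∀ {α : T.VE}, T.leVE (.inl x) α → T.leVE (.inl y) α →
    T.leVE (.inl (T.lca x y)) α
  | .inl _, h₁, h₂ | .inr _, h₁, h₂ => lca_le h₁ h₂

/-- An edge `w` lies on the path between `x` and `y` iff it separates `x` from `y`. -/
theorem lt_lca_iff_not_le {w : T.V} (hx : x ≤ w) : w < T.lca x y ↔ ¬ y ≤ w := by
  refine ⟨fun hlt hy => not_le_of_gt hlt (lca_le hx hy), fun hy => ?_⟩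
  have hlca : ¬ T.lca x y ≤ w := fun h => hy ((le_lca_right x y).trans h)
  exact lt_of_le_not_ge ((le_total_of_le_of_le hx (le_lca_left x y)).resolve_right hlca) hlca

end PPTree

open PPTree

section Cograph

variable {T : PPTree}

theorem isCographOnLeaves_of_lca (t : T.V → Prop) :
    IsCographOnLeaves T fun x y => T.isLeaf x ∧ T.isLeaf y ∧ x ≠ y ∧ t (T.lca x y) := by
  rintro ⟨a, b, c, d, la, lb, lc, ld, -, hac, had, -, hbd, -, ⟨-, -, -, tab⟩, ⟨-, -, -, tbc⟩,
    ⟨-, -, -, tcd⟩, nac, nad, nbd⟩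
  replace nac : ¬ t (T.lca a c) := fun h => nac ⟨la, lc, hac, h⟩
  replace nad : ¬ t (T.lca a d) := fun h => nad ⟨la, ld, had, h⟩
  replace nbd : ¬ t (T.lca b d) := fun h => nbd ⟨lb, ld, hbd, h⟩
  have h₁ := lca_eq_lca_of_not_pred t tab tbc nac
  have h₃ := lca_eq_lca_of_not_pred t tbc tcd nbd
  rcases lca_eq_or_lca_eq_or_lca_eq h₁ rfl h₃.symm with h | h | h
  · exact nac (h ▸ tbc)
  · exact nbd (h ▸ tbc)
  · exact nad (h ▸ tbc)

theorem IsCographOnLeaves.and_of_trans {P Q : T.V → T.V → Prop} (hP : IsCographOnLeaves T P)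
    (hQ : ∀ a b c, Q a b → Q b c → Q a c) :
    IsCographOnLeaves T fun x y => P x y ∧ Q x y := by
  rintro ⟨a, b, c, d, la, lb, lc, ld, hab, hac, had, hbc, hbd, hcd, ⟨pab, qab⟩, ⟨pbc, qbc⟩,
    ⟨pcd, qcd⟩, nac, nad, nbd⟩
  have qbd := hQ _ _ _ qbc qcd
  exact hP ⟨a, b, c, d, la, lb, lc, ld, hab, hac, had, hbc, hbd, hcd, pab, pbc, pcd,
    fun h => nac ⟨h, hQ _ _ _ qab qbc⟩, fun h => nad ⟨h, hQ _ _ _ qab qbd⟩,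
    fun h => nbd ⟨h, qbd⟩⟩

end Cograph

section PathHGT

variable {T S : PPTree} {μ : T.V → S.VE} {a b c x y : T.V}

theorem pathHGT_iff : PathHGT T S μ x y ↔
    ∃ w, Xor (x ≤ w) (y ≤ w) ∧ ¬ S.cmpVE (μ (T.parent w)) (μ w) := by
  refine exists_congr fun w => ?_
  rw [← and_assoc]
  refine and_congr_left fun _ => ⟨?_, ?_⟩
  · rintro ⟨hx | hy, hlt⟩
    · exact .inl ⟨hx, (lt_lca_iff_not_le hx).1 hlt⟩
    · exact .inr ⟨hy, (lt_lca_iff_not_le hy).1 (lca_comm x y ▸ hlt)⟩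
  · rintro (⟨hx, hy⟩ | ⟨hy, hx⟩)
    · exact ⟨.inl hx, (lt_lca_iff_not_le hx).2 hy⟩
    · exact ⟨.inr hy, lca_comm y x ▸ (lt_lca_iff_not_le hy).2 hx⟩

theorem pathHGT_comm : PathHGT T S μ x y ↔ PathHGT T S μ y x := by
  simp only [pathHGT_iff, xor_comm]

theorem not_pathHGT_trans (hab : ¬ PathHGT T S μ a b) (hbc : ¬ PathHGT T S μ b c) :
    ¬ PathHGT T S μ a c := by
  rw [pathHGT_iff] at *
  rintro ⟨w, hac, hHGT⟩
  have : Xor (a ≤ w) (b ≤ w) ∨ Xor (b ≤ w) (c ≤ w) := by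
    unfold Xor at *
    tauto
  exact this.elim (fun h => hab ⟨w, h, hHGT⟩) (fun h => hbc ⟨w, h, hHGT⟩)

end PathHGT

def PreservesLca (T S : PPTree) (μ : T.V → S.VE) (σ : T.V → S.V) (x y : T.V) : Prop :=
  μ (T.lca x y) = Sum.inl (S.lca (σ x) (σ y))

theorem PreservesLca.symm {T S : PPTree} {μ : T.V → S.VE} {σ : T.V → S.V} {x y : T.V}
    (h : PreservesLca T S μ σ x y) : PreservesLca T S μ σ y x := by
  rwa [PreservesLca, lca_comm, lca_comm (σ y)]

namespace IsRelaxedScenario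

variable {T S : PPTree} {μ : T.V → S.VE} {τT : T.V → ℝ} {τS : S.V → ℝ}
  {a b c x y z v u : T.V}

theorem time_lt_of_ltVE (hsc : IsRelaxedScenario T S μ τT τS) (h : S.ltVE (μ x) (μ y)) :
    τT x < τT y := by
  have hτ : StrictMono τS := hsc.timeS
  obtain ⟨hle, hne⟩ := h
  rcases hx : μ x with s | e <;> rcases hy : μ y with t | f <;> rw [hx, hy] at hle hne
  · rw [← hsc.S2 x s hx, ← hsc.S2 y t hy]
    exact hτ (lt_of_le_of_ne hle fun h => hne (h ▸ rfl))
  · linarith [hsc.S2 x s hx, hτ.monotone (show s ≤ f.1 from hle), (hsc.S3 y f hy).1]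
  · linarith [(hsc.S3 x e hx).2, hτ.monotone (show S.parent e.1 ≤ t from hle), hsc.S2 y t hy]
  · have hef : e.1 < f.1 := lt_of_le_of_ne hle fun h => hne (congrArg _ (Subtype.ext h))
    linarith [(hsc.S3 x e hx).2, hτ.monotone (parent_le_of_lt hef), (hsc.S3 y f hy).1]

theorem inl_ne_inl_of_lt (hsc : IsRelaxedScenario T S μ τT τS) {s t : S.V} (h : x < y)
    (hx : μ x = .inl s) (hy : μ y = .inl t) : s ≠ t := by
  rintro rfl
  exact (hsc.timeT x y h).ne ((hsc.S2 x s hx).symm.trans (hsc.S2 y s hy))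

/-- Comparable images are ordered like the endpoints, since the child is earlier. -/
theorem mu_leVE_mu_parent (hsc : IsRelaxedScenario T S μ τT τS)
    (h : S.cmpVE (μ (T.parent x)) (μ x)) : S.leVE (μ x) (μ (T.parent x)) := by
  by_cases hroot : T.parent x = x
  · rw [hroot]
    exact leVE_refl _
  rcases h with hle | hle
  · by_cases heq : μ (T.parent x) = μ x
    · rw [heq]
      exact leVE_refl _
    · exact absurd (hsc.timeT _ _ (lt_of_le_of_ne (le_parent x) (Ne.symm hroot)))
        (hsc.time_lt_of_ltVE ⟨hle, heq⟩).not_gt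
  · exact hle

theorem mu_leVE_mu_of_le (hsc : IsRelaxedScenario T S μ τT τS) (hvu : v ≤ u)
    (hfree : ∀ w, v ≤ w → w < u → S.cmpVE (μ (T.parent w)) (μ w)) : S.leVE (μ v) (μ u) := by
  obtain ⟨n, hn⟩ := le_iff_exists_iterate.1 hvu
  induction n generalizing v with
  | zero =>
    subst hn
    exact leVE_refl _
  | succ n ih =>
    by_cases hv : v = u
    · subst hv
      exact leVE_refl _
    rw [Function.iterate_succ_apply] at hn
    refine leVE_trans (hsc.mu_leVE_mu_parent (hfree v le_rfl (lt_of_le_of_ne hvu hv))) ?_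
    exact ih (le_iff_exists_iterate.2 ⟨n, hn⟩)
      (fun w hw hwu => hfree w ((le_parent v).trans hw) hwu) hn

theorem mu_leVE_mu_lca (hsc : IsRelaxedScenario T S μ τT τS)
    (hxy : ¬ PathHGT T S μ x y) (hv : x ≤ v ∨ y ≤ v) (hvl : v ≤ T.lca x y) :
    S.leVE (μ v) (μ (T.lca x y)) :=
  hsc.mu_leVE_mu_of_le hvl fun w hw hwl => by_contra fun hHGT =>
    hxy ⟨w, hv.imp (·.trans hw) (·.trans hw), hwl, hHGT⟩

theorem inl_lca_leVE_mu_lca (hsc : IsRelaxedScenario T S μ τT τS) {σ : T.V → S.V}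
    (hσ : SigmaCompat T S μ σ) (hx : T.isLeaf x) (hy : T.isLeaf y) (hxy : ¬ PathHGT T S μ x y) :
    S.leVE (.inl (S.lca (σ x) (σ y))) (μ (T.lca x y)) := by
  refine inl_lca_leVE ?_ ?_
  · rw [← hσ x hx]
    exact hsc.mu_leVE_mu_lca hxy (.inl le_rfl) (le_lca_left x y)
  · rw [← hσ y hy]
    exact hsc.mu_leVE_mu_lca hxy (.inr le_rfl) (le_lca_right x y)

variable {σ : T.V → S.V}

theorem preservesLca_of_lca_lt (hsc : IsRelaxedScenario T S μ τT τS)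
    (hab : PreservesLca T S μ σ a b) (hbc : PreservesLca T S μ σ b c)
    (hbc' : ¬ PathHGT T S μ b c) (hlt : T.lca a b < T.lca b c) : PreservesLca T S μ σ a c := by
  have hle : S.lca (σ a) (σ b) ≤ S.lca (σ b) (σ c) := by
    have := hsc.mu_leVE_mu_lca hbc' (.inl (le_lca_right a b)) hlt.le
    rwa [hab, hbc] at this
  have hne := hsc.inl_ne_inl_of_lt hlt hab hbc
  rw [PreservesLca, lca_eq_of_lca_lt hlt, hbc, lca_eq_of_lca_lt (lt_of_le_of_ne hle hne)]

theorem lca_eq_lca_of_preservesLca (hsc : IsRelaxedScenario T S μ τT τS)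
    (hab : PreservesLca T S μ σ a b) (hbc : PreservesLca T S μ σ b c)
    (hab' : ¬ PathHGT T S μ a b) (hbc' : ¬ PathHGT T S μ b c)
    (hac : ¬ PreservesLca T S μ σ a c) : T.lca a b = T.lca b c := by
  by_contra hne
  rcases le_total_of_le_of_le (le_lca_right a b) (le_lca_left b c) with hle | hle
  · exact hac (hsc.preservesLca_of_lca_lt hab hbc hbc' (lt_of_le_of_ne hle hne))
  · refine hac (hsc.preservesLca_of_lca_lt hbc.symm hab.symm (pathHGT_comm.not.1 hab') ?_).symm
    rw [lca_comm c b, lca_comm b a]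
    exact lt_of_le_of_ne hle (Ne.symm hne)

/-- `μ(lca x y)` lies between `lca(σ x, σ y)` and `μ(lca x z)`, so it equals `lca(σ x, σ y)`
as soon as `μ(lca x z)` does. -/
theorem preservesLca_of_mu_lca_eq (hsc : IsRelaxedScenario T S μ τT τS)
    (hσ : SigmaCompat T S μ σ) (hx : T.isLeaf x) (hy : T.isLeaf y)
    (hxy : ¬ PathHGT T S μ x y) (hxz : ¬ PathHGT T S μ x z)
    (hyz : y ≤ T.lca x z) (hμ : μ (T.lca x z) = .inl (S.lca (σ x) (σ y))) :
    PreservesLca T S μ σ x y :=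
  leVE_antisymm
    (hμ ▸ hsc.mu_leVE_mu_lca hxz (.inl (le_lca_left x y)) (lca_le (le_lca_left x z) hyz))
    (hsc.inl_lca_leVE_mu_lca hσ hx hy hxy)

theorem strictOrtholog_isCograph (hsc : IsRelaxedScenario T S μ τT τS)
    (hσ : SigmaCompat T S μ σ) : IsCographOnLeaves T (StrictOrtholog T S μ σ) := by
  rintro ⟨a, b, c, d, la, lb, lc, ld, -, dac, dad, -, dbd, -, ⟨⟨-, -, -, hab⟩, nPab⟩,
    ⟨⟨-, -, -, hbc⟩, nPbc⟩, ⟨⟨-, -, -, hcd⟩, nPcd⟩, nac, nad, nbd⟩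
  have nPac := not_pathHGT_trans nPab nPbc
  have nPbd := not_pathHGT_trans nPbc nPcd
  have nPad := not_pathHGT_trans nPab nPbd
  replace nac : ¬ PreservesLca T S μ σ a c := fun h => nac ⟨⟨la, lc, dac, h⟩, nPac⟩
  replace nad : ¬ PreservesLca T S μ σ a d := fun h => nad ⟨⟨la, ld, dad, h⟩, nPad⟩
  replace nbd : ¬ PreservesLca T S μ σ b d := fun h => nbd ⟨⟨lb, ld, dbd, h⟩, nPbd⟩
  have h₁ := hsc.lca_eq_lca_of_preservesLca hab hbc nPab nPbc nac
  have h₃ := hsc.lca_eq_lca_of_preservesLca hbc hcd nPbc nPcd nbd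
  have hμab : μ (T.lca a b) = .inl (S.lca (σ b) (σ c)) := h₁ ▸ hbc
  have m₁ : S.lca (σ a) (σ b) = S.lca (σ b) (σ c) := Sum.inl_injective (hab.symm.trans hμab)
  have m₃ : S.lca (σ c) (σ d) = S.lca (σ b) (σ c) :=
    Sum.inl_injective (hcd.symm.trans (h₃ ▸ hbc))
  have hdu : d ≤ T.lca b c := h₃ ▸ le_lca_right c d
  rcases lca_eq_or_lca_eq_or_lca_eq m₁ rfl m₃ with h | h | h
  · exact nac (hsc.preservesLca_of_mu_lca_eq hσ la lc nPac nPab (h₁ ▸ le_lca_right b c)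
      (h ▸ hμab))
  · exact nbd (hsc.preservesLca_of_mu_lca_eq hσ lb ld nPbd nPbc hdu (h ▸ hbc))
  · exact nad (hsc.preservesLca_of_mu_lca_eq hσ la ld nPad nPab (h₁ ▸ hdu) (h ▸ hμab))

end IsRelaxedScenario

/-- For every relaxed σ-scenario
`𝒮 = (T,S,μ,τ_T,τ_S,σ)`, the weak quasi-orthology graph `Ψw(𝒮)`, the weak
orthology graph `Θw(𝒮)`, and the strict orthology graph `Θs(𝒮)` are
cographs. -/
theorem orthology_graphs_are_cographs
    (T S : PPTree) (μ : T.V → S.VE) (τT : T.V → ℝ) (τS : S.V → ℝ)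
    (σ : T.V → S.V)
    (hsc : IsRelaxedScenario T S μ τT τS) (hσ : SigmaCompat T S μ σ) :
    IsCographOnLeaves T (WeakQuasiOrtholog T S μ) ∧
    IsCographOnLeaves T (WeakOrtholog T S μ) ∧
    IsCographOnLeaves T (StrictOrtholog T S μ σ) := by
  have hΨ : IsCographOnLeaves T (WeakQuasiOrtholog T S μ) :=
    isCographOnLeaves_of_lca fun v => ∃ s, μ v = .inl s ∧ s ≠ S.root ∧ ¬ S.isLeaf s
  exact ⟨hΨ, hΨ.and_of_trans fun _ _ _ => not_pathHGT_trans, hsc.strictOrtholog_isCograph hσ⟩
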